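/- arXiv:1805.08712 — 3 statements merged into one kernel-verified Lean document; each statement's English description precedes it below -/
import Mathlib

section
/- Necessity half of the Kuhn–Munkres theorem: if σ : R → P is a minimum-cost perfect matching (i.e. ∑_{i∈R} w(i, σ(i)) ≤ ∑_{i∈R} w(i, τ(i)) for every bijection τ : R → P) and (yR, yP) is a maximum-cost feasible labeling (i.e. its cost is greatest among all feasible labelings), then every edge of σ is tight with respect to (yR, yP): w(i, σ(i)) = yR(i) + yP(σ(i)) for all i ∈ R. -/
/-!
Any perfect matching `τ` satisfies `c(y) ≤ c(τ)` for a feasible labeling `y`, with equality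
exactly when every edge of `τ` is tight. If `y` has maximum cost, the tight subgraph satisfies
Hall's condition: were `|N(S)| < |S|` for the tight neighbourhood `N(S)`, raising `yR` on `S`
and lowering `yP` on `N(S)` by the least slack of an edge from `S` to the complement of `N(S)`
would keep `y` feasible and raise its cost by `(|S| - |N(S)|) ε > 0`. Hall's theorem then gives
a perfect matching `τ` of tight edges, so `c(σ) ≤ c(τ) = c(y) ≤ c(σ)`, and equality in the last
step forces every edge of `σ` to be tight.
-/

open Finset Function

theorem Finset.exists_pos_forall_le_of_forall_pos {α : Type*} {s : Finset α} {f : α → ℝ}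
    (hf : ∀ a ∈ s, 0 < f a) : ∃ ε > 0, ∀ a ∈ s, ε ≤ f a := by
  rcases s.eq_empty_or_nonempty with rfl | hs
  · exact ⟨1, one_pos, by simp⟩
  · exact ⟨s.inf' hs f, (lt_inf'_iff hs).2 hf, fun a ha => inf'_le f ha⟩

namespace KuhnMunkres

variable {R P : Type*} {w : R → P → ℝ} {yR : R → ℝ} {yP : P → ℝ}

theorem feasible_shift [DecidableEq R] [DecidableEq P] {S : Finset R} {T : Finset P} {ε : ℝ}
    (hε : 0 ≤ ε) (hfeas : ∀ i j, yR i + yP j ≤ w i j)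
    (hslack : ∀ i ∈ S, ∀ j ∉ T, yR i + yP j + ε ≤ w i j) (i : R) (j : P) :
    (yR i + if i ∈ S then ε else 0) + (yP j - if j ∈ T then ε else 0) ≤ w i j := by
  have := hfeas i j
  by_cases hi : i ∈ S <;> by_cases hj : j ∈ T <;> simp only [hi, hj, if_true, if_false]
  · linarith
  · linarith [hslack i hi j hj]
  · linarith
  · linarith

variable [Fintype R] [Fintype P]

section Duality

variable {τ : R → P}

theorem sum_add_sum_eq_sum_comp (hτ : Bijective τ) :
    ∑ i, yR i + ∑ j, yP j = ∑ i, (yR i + yP (τ i)) := by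
  rw [sum_add_distrib, Fintype.sum_bijective τ hτ (fun i => yP (τ i)) yP fun _ => rfl]

theorem sum_add_sum_le_sum_of_bijective (hfeas : ∀ i j, yR i + yP j ≤ w i j)
    (hτ : Bijective τ) : ∑ i, yR i + ∑ j, yP j ≤ ∑ i, w i (τ i) :=
  (sum_add_sum_eq_sum_comp hτ).trans_le (sum_le_sum fun i _ => hfeas i (τ i))

theorem sum_add_sum_eq_sum_iff (hfeas : ∀ i j, yR i + yP j ≤ w i j) (hτ : Bijective τ) :
    ∑ i, yR i + ∑ j, yP j = ∑ i, w i (τ i) ↔ ∀ i, yR i + yP (τ i) = w i (τ i) := by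
  rw [sum_add_sum_eq_sum_comp hτ, sum_eq_sum_iff_of_le fun i _ => hfeas i (τ i)]
  simp

end Duality

section Shift

variable [DecidableEq R] [DecidableEq P] {S : Finset R} {T : Finset P} {ε : ℝ}

theorem sum_shift :
    ∑ i, (yR i + if i ∈ S then ε else 0) + ∑ j, (yP j - if j ∈ T then ε else 0) =
      ∑ i, yR i + ∑ j, yP j + (#S - #T) * ε := by
  simp only [sum_add_distrib, sum_sub_distrib, sum_ite_mem, univ_inter, sum_const, nsmul_eq_mul]
  ring

end Shift

noncomputable def tightNbrs (w : R → P → ℝ) (yR : R → ℝ) (yP : P → ℝ) (i : R) : Finset P :=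
  {j | yR i + yP j = w i j}

variable (hfeas : ∀ i j, yR i + yP j ≤ w i j)
  (hymax : ∀ (y'R : R → ℝ) (y'P : P → ℝ), (∀ i j, y'R i + y'P j ≤ w i j) →
    (∑ i, y'R i) + (∑ j, y'P j) ≤ (∑ i, yR i) + (∑ j, yP j))
include hfeas hymax

theorem card_le_card_biUnion_tightNbrs [DecidableEq P] (S : Finset R) :
    #S ≤ #(S.biUnion (tightNbrs w yR yP)) := by
  classical
  set T := S.biUnion (tightNbrs w yR yP)
  by_contra! hST
  have hpos : ∀ e ∈ S ×ˢ Tᶜ, 0 < w e.1 e.2 - yR e.1 - yP e.2 := by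
    rintro ⟨i, j⟩ hij
    obtain ⟨hi, hj⟩ := mem_product.1 hij
    have hne : yR i + yP j ≠ w i j := fun h =>
      mem_compl.1 hj (mem_biUnion.2 ⟨i, hi, by simp [tightNbrs, h]⟩)
    linarith [lt_of_le_of_ne (hfeas i j) hne]
  obtain ⟨ε, hε, hεle⟩ := exists_pos_forall_le_of_forall_pos hpos
  have hslack : ∀ i ∈ S, ∀ j ∉ T, yR i + yP j + ε ≤ w i j := fun i hi j hj => by
    linarith [hεle (i, j) (mem_product.2 ⟨hi, mem_compl.2 hj⟩)]
  have hcost := hymax _ _ (feasible_shift hε.le hfeas hslack)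
  rw [sum_shift] at hcost
  have hdeficit : (0 : ℝ) < #S - #T := sub_pos.2 (by exact_mod_cast hST)
  linarith [mul_pos hdeficit hε]

theorem exists_bijective_forall_tight (hcard : Fintype.card R = Fintype.card P) :
    ∃ τ : R → P, Bijective τ ∧ ∀ i, yR i + yP (τ i) = w i (τ i) := by
  classical
  obtain ⟨τ, hτinj, hτ⟩ := (all_card_le_biUnion_card_iff_exists_injective _).1
    (card_le_card_biUnion_tightNbrs hfeas hymax)
  refine ⟨τ, (Fintype.bijective_iff_injective_and_card τ).2 ⟨hτinj, hcard⟩, fun i => ?_⟩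
  simpa [tightNbrs] using hτ i

end KuhnMunkres

open KuhnMunkres in
theorem kuhn_munkres_necessity_general
    {R P : Type*} [Fintype R] [Fintype P]
    (r : ℕ) (hcardR : Fintype.card R = r) (hcardP : Fintype.card P = r)
    (w : R → P → ℝ)
    (σ : R → P) (hσ : Function.Bijective σ)
    (hσmin : ∀ τ : R → P, Function.Bijective τ →
      ∑ i, w i (σ i) ≤ ∑ i, w i (τ i))
    (yR : R → ℝ) (yP : P → ℝ)
    (hfeas : ∀ i j, yR i + yP j ≤ w i j)
    (hymax : ∀ (y'R : R → ℝ) (y'P : P → ℝ), (∀ i j, y'R i + y'P j ≤ w i j) →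
      (∑ i, y'R i) + (∑ j, y'P j) ≤ (∑ i, yR i) + (∑ j, yP j)) :
    ∀ i, w i (σ i) = yR i + yP (σ i) := by
  obtain ⟨τ, hτ, hτtight⟩ := exists_bijective_forall_tight hfeas hymax (hcardR.trans hcardP.symm)
  have hτcost := (sum_add_sum_eq_sum_iff hfeas hτ).2 hτtight
  have hσcost : ∑ i, yR i + ∑ j, yP j = ∑ i, w i (σ i) :=
    le_antisymm (sum_add_sum_le_sum_of_bijective hfeas hσ) (hτcost ▸ hσmin τ hτ)
  exact fun i => ((sum_add_sum_eq_sum_iff hfeas hσ).1 hσcost i).symm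

/-- Necessity half of the Kuhn–Munkres theorem: if `σ` is a minimum-cost
perfect matching and `(yR, yP)` is a maximum-cost feasible labeling, then every
edge of `σ` is tight with respect to `(yR, yP)`. -/
theorem kuhn_munkres_necessity
    {R P : Type*} [Fintype R] [Fintype P]
    (r : ℕ) (hr : 1 ≤ r) (hcardR : Fintype.card R = r) (hcardP : Fintype.card P = r)
    (w : R → P → ℝ) (hw : ∀ i j, 0 ≤ w i j)
    (σ : R → P) (hσ : Function.Bijective σ)
    (hσmin : ∀ τ : R → P, Function.Bijective τ →
      ∑ i, w i (σ i) ≤ ∑ i, w i (τ i))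
    (yR : R → ℝ) (yP : P → ℝ)
    (hfeas : ∀ i j, yR i + yP j ≤ w i j)
    (hymax : ∀ (y'R : R → ℝ) (y'P : P → ℝ), (∀ i j, y'R i + y'P j ≤ w i j) →
      (∑ i, y'R i) + (∑ j, y'P j) ≤ (∑ i, yR i) + (∑ j, yP j)) :
    ∀ i, w i (σ i) = yR i + yP (σ i) :=
  kuhn_munkres_necessity_general r hcardR hcardP w σ hσ hσmin yR yP hfeas hymax
end

section
/- Strong duality for the linear sum assignment problem (implicit in the convergence of the Hungarian Method): there exist a feasible vertex labeling (yR, yP) and a perfect matching σ : R → P whose costs are equal, i.e. ∑_{i∈R} yR(i) + ∑_{j∈P} yP(j) = ∑_{i∈R} w(i, σ(i)); consequently the minimum cost over all perfect matchings equals the maximum cost over all feasible labelings. -/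
open Finset

private lemma weak_duality {R P : Type*} [Fintype R] [Fintype P]
    (w : R → P → ℝ) (yR : R → ℝ) (yP : P → ℝ)
    (hf : ∀ i j, yR i + yP j ≤ w i j) (σ : R → P) (hσ : Function.Bijective σ) :
    (∑ i, yR i) + (∑ j, yP j) ≤ ∑ i, w i (σ i) := by
  have h1 : (∑ j, yP j) = ∑ i, yP (σ i) :=
    (Fintype.sum_bijective σ hσ _ _ (fun i => rfl)).symm
  rw [h1, ← Finset.sum_add_distrib]
  exact Finset.sum_le_sum fun i _ => hf i (σ i)


private lemma exists_max_labeling {R P : Type*} [Fintype R] [Fintype P]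
    [Nonempty R] [Nonempty P] (hcard : Fintype.card R = Fintype.card P)
    (w : R → P → ℝ) :
    ∃ (yR : R → ℝ) (yP : P → ℝ), (∀ i j, yR i + yP j ≤ w i j) ∧
      ∀ (zR : R → ℝ) (zP : P → ℝ), (∀ i j, zR i + zP j ≤ w i j) →
        (∑ i, zR i) + (∑ j, zP j) ≤ (∑ i, yR i) + (∑ j, yP j) := by
  classical
  set n : ℕ := Fintype.card R with hn
  -- bound on weights
  obtain ⟨B, hB0, hBw⟩ : ∃ B : ℝ, 0 ≤ B ∧ ∀ i j, |w i j| ≤ B := by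
    refine ⟨univ.sup' univ_nonempty (fun p : R × P => |w p.1 p.2|), ?_, ?_⟩
    · obtain ⟨p⟩ := (inferInstance : Nonempty (R × P))
      exact le_trans (abs_nonneg (w p.1 p.2))
        (Finset.le_sup' (fun p : R × P => |w p.1 p.2|) (mem_univ p))
    · intro i j; exact Finset.le_sup' (fun p : R × P => |w p.1 p.2|) (mem_univ (i, j))
  set L : ℝ := -(2 * n + 1) * B - 1 with hL
  have hwB : ∀ i j, -B ≤ w i j ∧ w i j ≤ B := fun i j => abs_le.mp (hBw i j)
  -- initial labeling
  set y0R : R → ℝ := fun i => univ.inf' univ_nonempty (w i) with hy0R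
  have hy0feas : ∀ i j, y0R i + (0 : ℝ) ≤ w i j := fun i j => by
    rw [add_zero]; exact Finset.inf'_le (w i) (mem_univ j)
  have hy0B : ∀ i, -B ≤ y0R i ∧ y0R i ≤ B := by
    intro i
    constructor
    · exact Finset.le_inf' _ _ fun j _ => (hwB i j).1
    · obtain ⟨j⟩ := (inferInstance : Nonempty P)
      exact le_trans (Finset.inf'_le (w i) (mem_univ j)) (hwB i j).2
  set c0 : ℝ := ∑ i, y0R i with hc0
  have hc0lb : -(n : ℝ) * B ≤ c0 := by
    have := Finset.card_nsmul_le_sum univ y0R (-B) (fun i _ => (hy0B i).1)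
    simpa [hc0, nsmul_eq_mul, mul_comm, hn] using this
  -- compact feasible region
  set box : Set ((R → ℝ) × (P → ℝ)) :=
    Set.Icc ((fun _ => L), (fun _ => L)) ((fun _ => B), (fun _ => 0)) with hbox
  set S : Set ((R → ℝ) × (P → ℝ)) :=
    {p | ∀ i j, p.1 i + p.2 j ≤ w i j} ∩ box with hS
  have hfeasclosed : IsClosed {p : (R → ℝ) × (P → ℝ) | ∀ i j, p.1 i + p.2 j ≤ w i j} := by
    rw [Set.setOf_forall]
    refine isClosed_iInter fun i => ?_
    rw [Set.setOf_forall]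
    refine isClosed_iInter fun j => ?_
    exact isClosed_le (((continuous_apply i).comp continuous_fst).add
      ((continuous_apply j).comp continuous_snd)) continuous_const
  have hScompact : IsCompact S :=
    IsCompact.of_isClosed_subset isCompact_Icc (hfeasclosed.inter isClosed_Icc)
      Set.inter_subset_right
  set f : ((R → ℝ) × (P → ℝ)) → ℝ := fun p => (∑ i, p.1 i) + (∑ j, p.2 j) with hf
  have hfc : Continuous f := by
    apply Continuous.add
    · exact continuous_finset_sum _ fun i _ => (continuous_apply i).comp continuous_fst
    · exact continuous_finset_sum _ fun j _ => (continuous_apply j).comp continuous_snd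
  have hy0mem : (y0R, fun _ => (0 : ℝ)) ∈ S := by
    constructor
    · intro i j; exact hy0feas i j
    · constructor
      · constructor
        · intro i
          have : -B ≤ y0R i := (hy0B i).1
          have hLB : L ≤ -B := by
            have : (0:ℝ) ≤ 2 * n * B := by positivity
            rw [hL]; nlinarith
          exact hLB.trans this
        · intro j
          have : (0:ℝ) ≤ 2 * n * B := by positivity
          rw [hL]; dsimp; nlinarith
      · constructor
        · intro i; exact (hy0B i).2
        · intro j; exact le_refl 0
  obtain ⟨y, hyS, hymax⟩ := hScompact.exists_isMaxOn ⟨_, hy0mem⟩ hfc.continuousOn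
  refine ⟨y.1, y.2, hyS.1, ?_⟩
  intro zR zP hzfeas
  -- normalize z
  set c : ℝ := univ.sup' univ_nonempty zP with hc
  obtain ⟨j0, _, hj0⟩ := Finset.exists_mem_eq_sup' (univ_nonempty) zP
  set zR' : R → ℝ := fun i => zR i + c with hzR'
  set zP' : P → ℝ := fun j => zP j - c with hzP'
  have hcost : (∑ i, zR' i) + (∑ j, zP' j) = (∑ i, zR i) + (∑ j, zP j) := by
    simp only [hzR', hzP', Finset.sum_add_distrib, Finset.sum_sub_distrib,
      Finset.sum_const, card_univ]
    rw [← hcard, ← hn]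
    ring
  have hfeas' : ∀ i j, zR' i + zP' j ≤ w i j := fun i j => by
    simpa [hzR', hzP'] using hzfeas i j
  have hzP'le : ∀ j, zP' j ≤ 0 := fun j => by
    simp only [hzP', sub_nonpos]; exact Finset.le_sup' zP (mem_univ j)
  have hzR'le : ∀ i, zR' i ≤ B := by
    intro i
    have h1 : zR' i + zP' j0 ≤ w i j0 := hfeas' i j0
    have h2 : zP' j0 = 0 := by simp [hzP', hc, ← hj0]
    have := (hwB i j0).2
    linarith [h1, h2, this]
  by_cases hcase : (∑ i, zR i) + (∑ j, zP j) ≤ c0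
  · refine hcase.trans ?_
    have := hymax hy0mem
    simpa [hf, hc0] using this
  · push_neg at hcase
    have hsumR' : ∑ i, zR' i ≤ (n : ℝ) * B := by
      have := Finset.sum_le_card_nsmul univ zR' B (fun i _ => hzR'le i)
      simpa [nsmul_eq_mul, hn] using this
    have hsumP'le : ∑ j, zP' j ≤ 0 := Finset.sum_nonpos fun j _ => hzP'le j
    have hmem : (zR', zP') ∈ S := by
      refine ⟨hfeas', ⟨⟨?_, ?_⟩, ⟨fun i => hzR'le i, fun j => hzP'le j⟩⟩⟩
      · -- lower bound on zR'
        intro i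
        have herase : zR' i + ∑ x ∈ univ.erase i, zR' x = ∑ x ∈ univ, zR' x :=
          Finset.add_sum_erase univ zR' (mem_univ i)
        have h1 : ∑ x ∈ univ.erase i, zR' x ≤ (n : ℝ) * B := by
          have h2 := Finset.sum_le_card_nsmul (univ.erase i) zR' B (fun i _ => hzR'le i)
          have h3 : ((univ.erase i).card : ℝ) * B ≤ (n : ℝ) * B := by
            have : (univ.erase i).card ≤ n := by
              simpa [hn] using Finset.card_le_card (Finset.subset_univ (univ.erase i))
            exact mul_le_mul_of_nonneg_right (by exact_mod_cast this) hB0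
          calc ∑ x ∈ univ.erase i, zR' x ≤ ((univ.erase i).card : ℝ) * B := by
                simpa [nsmul_eq_mul] using h2
            _ ≤ (n : ℝ) * B := h3
        have hcz : (∑ x, zR' x) + ∑ j, zP' j > c0 := by rw [hcost]; exact hcase
        rw [hL]; nlinarith [hc0lb]
      · -- lower bound on zP'
        intro j
        have herase : zP' j + ∑ x ∈ univ.erase j, zP' x = ∑ x ∈ univ, zP' x :=
          Finset.add_sum_erase univ zP' (mem_univ j)
        have h1 : ∑ x ∈ univ.erase j, zP' x ≤ 0 :=
          Finset.sum_nonpos fun x _ => hzP'le x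
        have hcz : (∑ x, zR' x) + ∑ j, zP' j > c0 := by rw [hcost]; exact hcase
        rw [hL]; nlinarith [hc0lb]
    have := hymax hmem
    simp only [hf, Set.mem_setOf_eq] at this
    calc (∑ i, zR i) + (∑ j, zP j) = (∑ i, zR' i) + (∑ j, zP' j) := hcost.symm
      _ ≤ (∑ i, y.1 i) + (∑ j, y.2 j) := this

/-- Strong duality for the linear sum assignment problem: there exist a
feasible vertex labeling `(yR, yP)` and a perfect matching `σ` whose costs are
equal; consequently the minimum cost over all perfect matchings equals the
maximum cost over all feasible labelings (both attained at this common value). -/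
theorem assignment_strong_duality
    {R P : Type*} [Fintype R] [Fintype P]
    (r : ℕ) (hr : 1 ≤ r) (hcardR : Fintype.card R = r) (hcardP : Fintype.card P = r)
    (w : R → P → ℝ) :
    ∃ (yR : R → ℝ) (yP : P → ℝ) (σ : R → P),
      (∀ i j, yR i + yP j ≤ w i j) ∧
      Function.Bijective σ ∧
      (∑ i, yR i) + (∑ j, yP j) = ∑ i, w i (σ i) ∧
      IsLeast {c : ℝ | ∃ τ : R → P, Function.Bijective τ ∧ c = ∑ i, w i (τ i)}
        (∑ i, w i (σ i)) ∧
      IsGreatest {c : ℝ | ∃ (y'R : R → ℝ) (y'P : P → ℝ),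
          (∀ i j, y'R i + y'P j ≤ w i j) ∧ c = (∑ i, y'R i) + (∑ j, y'P j)}
        ((∑ i, yR i) + (∑ j, yP j)) := by
  classical
  haveI : Nonempty R := Fintype.card_pos_iff.mp (by rw [hcardR]; omega)
  haveI : Nonempty P := Fintype.card_pos_iff.mp (by rw [hcardP]; omega)
  obtain ⟨yR, yP, hfeas, hmax⟩ := exists_max_labeling (hcardR.trans hcardP.symm) w
  set t : R → Finset P := fun i => univ.filter fun j => yR i + yP j = w i j with ht
  have hall : ∀ s : Finset R, s.card ≤ (s.biUnion t).card := by
    intro s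
    by_contra hlt
    push_neg at hlt
    set N := s.biUnion t with hN
    have hs_ne : s.Nonempty := Finset.card_pos.mp (lt_of_le_of_lt (Nat.zero_le _) hlt)
    have hNc_ne : (univ \ N).Nonempty := by
      rw [Finset.sdiff_nonempty]
      intro hsub
      have h1 : (univ : Finset P).card ≤ N.card := Finset.card_le_card hsub
      have h2 : s.card ≤ Fintype.card R := by
        simpa using Finset.card_le_card (Finset.subset_univ s)
      rw [Finset.card_univ, hcardP] at h1
      rw [hcardR] at h2
      omega
    set pr := s ×ˢ (univ \ N) with hpr'
    have hpr : pr.Nonempty := hs_ne.product hNc_ne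
    set δ := pr.inf' hpr (fun q => w q.1 q.2 - yR q.1 - yP q.2) with hδ
    have hδpos : 0 < δ := by
      rw [hδ, Finset.lt_inf'_iff]
      rintro ⟨i, j⟩ hq
      rw [hpr', Finset.mem_product] at hq
      have hjN : j ∉ N := (Finset.mem_sdiff.mp hq.2).2
      have hne : yR i + yP j ≠ w i j := by
        intro h
        exact hjN (Finset.mem_biUnion.mpr ⟨i, hq.1,
          Finset.mem_filter.mpr ⟨mem_univ j, h⟩⟩)
      have hle := hfeas i j
      have := lt_of_le_of_ne hle hne
      simp only [Set.mem_setOf_eq]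
      linarith
    set zR : R → ℝ := fun i => yR i + if i ∈ s then δ else 0 with hzR
    set zP : P → ℝ := fun j => yP j - if j ∈ N then δ else 0 with hzP
    have hzfeas : ∀ i j, zR i + zP j ≤ w i j := by
      intro i j
      by_cases his : i ∈ s
      · by_cases hjN : j ∈ N
        · simp only [hzR, hzP, his, hjN, if_pos]
          linarith [hfeas i j]
        · have hmemp : (i, j) ∈ pr := by
            rw [hpr', Finset.mem_product]
            exact ⟨his, Finset.mem_sdiff.mpr ⟨mem_univ j, hjN⟩⟩
          have hδle : δ ≤ w i j - yR i - yP j := by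
            rw [hδ]
            exact Finset.inf'_le (fun q : R × P => w q.1 q.2 - yR q.1 - yP q.2) hmemp
          simp only [hzR, hzP, his, hjN, if_pos, if_neg, not_false_iff]
          linarith
      · by_cases hjN : j ∈ N
        · simp only [hzR, hzP, his, hjN, if_pos, if_neg, not_false_iff]
          linarith [hfeas i j, hδpos.le]
        · simp only [hzR, hzP, his, hjN, if_neg, not_false_iff]
          linarith [hfeas i j]
    have h1 : ∑ i, zR i = (∑ i, yR i) + (s.card : ℝ) * δ := by
      simp only [hzR, Finset.sum_add_distrib, Finset.sum_ite_mem, Finset.univ_inter,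
        Finset.sum_const, nsmul_eq_mul]
    have h2 : ∑ j, zP j = (∑ j, yP j) - (N.card : ℝ) * δ := by
      simp only [hzP, Finset.sum_sub_distrib, Finset.sum_ite_mem, Finset.univ_inter,
        Finset.sum_const, nsmul_eq_mul]
    have hcost : (∑ i, yR i) + (∑ j, yP j) < (∑ i, zR i) + (∑ j, zP j) := by
      rw [h1, h2]
      have hlt' : (N.card : ℝ) * δ < (s.card : ℝ) * δ := by
        apply mul_lt_mul_of_pos_right _ hδpos
        exact_mod_cast hlt
      linarith
    exact absurd (hmax zR zP hzfeas) (not_le.mpr hcost)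
  obtain ⟨σ, hinj, hσt⟩ := (Finset.all_card_le_biUnion_card_iff_exists_injective t).mp hall
  have hbij : Function.Bijective σ :=
    (Fintype.bijective_iff_injective_and_card σ).mpr ⟨hinj, hcardR.trans hcardP.symm⟩
  have htight : ∀ i, yR i + yP (σ i) = w i (σ i) := fun i => by
    have := hσt i
    rw [ht] at this
    exact (Finset.mem_filter.mp this).2
  have hEq : (∑ i, yR i) + (∑ j, yP j) = ∑ i, w i (σ i) := by
    have h1 : (∑ j, yP j) = ∑ i, yP (σ i) :=
      (Fintype.sum_bijective σ hbij _ _ fun i => rfl).symm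
    rw [h1, ← Finset.sum_add_distrib]
    exact Finset.sum_congr rfl fun i _ => htight i
  refine ⟨yR, yP, σ, hfeas, hbij, hEq, ⟨⟨σ, hbij, rfl⟩, ?_⟩, ⟨⟨yR, yP, hfeas, rfl⟩, ?_⟩⟩
  · rintro c ⟨τ, hτ, rfl⟩
    rw [← hEq]
    exact weak_duality w yR yP hfeas τ hτ
  · rintro c ⟨zR, zP, hz, rfl⟩
    exact hmax zR zP hz
end

section
/- Statement (i) of the auxiliary lemma for the Hungarian Method (dual update preserves feasibility): let (yR, yP) be a feasible labeling, let R_c ⊆ R and P_c ⊆ P be such that every tight edge (i,j) has i ∈ R_c or j ∈ P_c, suppose R_c ≠ R and P_c ≠ P, and set δ := min{ w(i,j) − yR(i) − yP(j) : i ∈ R \ R_c, j ∈ P \ P_c }. Define the updated labeling y'R(i) = yR(i) − δ for i ∈ R_c and y'R(i) = yR(i) otherwise, and y'P(j) = yP(j) + δ for j ∈ P \ P_c and y'P(j) = yP(j) otherwise. Then (y'R, y'P) is again a feasible labeling: y'R(i) + y'P(j) ≤ w(i,j) for all i ∈ R, j ∈ P. -/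
/-- The Hungarian dual update preserves feasibility: subtracting the minimum
slack `δ` from the labels of covered robots `R_c` and adding `δ` to the labels
of uncovered targets `P \ P_c` yields again a feasible labeling. -/
theorem hungarian_dual_update_feasible
    {R P : Type*} [Fintype R] [Fintype P] [DecidableEq R] [DecidableEq P]
    (r : ℕ) (hr : 1 ≤ r) (hcardR : Fintype.card R = r) (hcardP : Fintype.card P = r)
    (w : R → P → ℝ)
    (yR : R → ℝ) (yP : P → ℝ)
    (hfeas : ∀ i j, yR i + yP j ≤ w i j)
    (Rc : Finset R) (Pc : Finset P)
    (hcover : ∀ i j, yR i + yP j = w i j → i ∈ Rc ∨ j ∈ Pc)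
    (hRc : Rc ≠ Finset.univ) (hPc : Pc ≠ Finset.univ)
    (δ : ℝ)
    (hδ : IsLeast {s : ℝ | ∃ i ∉ Rc, ∃ j ∉ Pc, s = w i j - yR i - yP j} δ)
    (y'R : R → ℝ) (y'P : P → ℝ)
    (hy'R : ∀ i, y'R i = if i ∈ Rc then yR i - δ else yR i)
    (hy'P : ∀ j, y'P j = if j ∈ Pc then yP j else yP j + δ) :
    ∀ i j, y'R i + y'P j ≤ w i j := by
  have hδ0 : 0 ≤ δ := by
    obtain ⟨⟨i, hi, j, hj, heq⟩, _⟩ := hδ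
    have := hfeas i j
    linarith
  intro i j
  rw [hy'R, hy'P]
  by_cases hi : i ∈ Rc <;> by_cases hj : j ∈ Pc <;> simp [hi, hj]
  · have := hfeas i j; linarith
  · have := hfeas i j; linarith
  · have := hfeas i j; linarith
  · have hle : δ ≤ w i j - yR i - yP j := hδ.2 ⟨i, hi, j, hj, rfl⟩
    linarith
end
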